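/- arXiv:1210.8101 — 5 statements merged into one kernel-verified Lean document; each statement's English description precedes it below -/
import Mathlib

section
/- For every vertex v of the Petersen graph P10, the graph P10 − v has a 2-factor, and every 2-factor of P10 − v is a Hamilton cycle of P10 − v, i.e., a single cycle of length 9. -/
/-!
A 2-factor of a finite graph is a disjoint union of cycles, and each of these cycles spans a
connected component. The Petersen graph has no triangles and no 4-cycles, so it has girth 5, and
so has every subgraph of `P10 − v`: every component of a 2-factor `H` of `P10 − v` has at least
5 vertices. As `P10 − v` has only `9 < 2 · 5` vertices, `H` is connected, and it is a single
cycle through all 9 vertices. Existence is witnessed by explicit Hamilton cycles of `P10 − v`.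
-/

open SimpleGraph

/-- A 2-factor of `G`: a 2-regular spanning subgraph. -/
def IsTwoFactor {V : Type*} (G H : SimpleGraph V) : Prop :=
  H ≤ G ∧ ∀ v, (H.neighborSet v).ncard = 2

/-- A perfect matching (1-factor) of `G`: a 1-regular spanning subgraph. -/
def IsOneFactor {V : Type*} (G M : SimpleGraph V) : Prop :=
  M ≤ G ∧ ∀ v, (M.neighborSet v).ncard = 1

/-- Every cycle of `H` has odd length. -/
def AllCyclesOdd {V : Type*} (H : SimpleGraph V) : Prop :=
  ∀ (v : V) (p : H.Walk v v), p.IsCycle → Odd p.length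

/-- `G` is odd 2-factored: every cycle of every 2-factor has odd length. -/
def OddTwoFactored {V : Type*} (G : SimpleGraph V) : Prop :=
  ∀ H, IsTwoFactor G H → AllCyclesOdd H

/-- `G` has a proper edge coloring with `n` colors. -/
def EdgeColorable {V : Type*} (G : SimpleGraph V) (n : ℕ) : Prop :=
  ∃ c : Sym2 V → Fin n, ∀ e₁ ∈ G.edgeSet, ∀ e₂ ∈ G.edgeSet,
    e₁ ≠ e₂ → (∃ v, v ∈ e₁ ∧ v ∈ e₂) → c e₁ ≠ c e₂

/-- The induced subgraph of `G` on `A` contains a cycle. -/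
def HasCycleIn {V : Type*} (G : SimpleGraph V) (A : Set V) : Prop :=
  ∃ (v : A) (p : (G.induce A).Walk v v), p.IsCycle

/-- Cyclic edge-connectivity at least `k`: every edge cut separating two
cycle-containing parts has at least `k` edges. -/
def CyclicEdgeConnGe {V : Type*} (G : SimpleGraph V) (k : ℕ) : Prop :=
  ∀ A : Set V, HasCycleIn G A → HasCycleIn G Aᶜ →
    k ≤ {e ∈ G.edgeSet | ∃ x ∈ A, ∃ y ∈ Aᶜ, e = s(x, y)}.ncard

/-- A snark: connected, cubic, girth at least 5, cyclically 4-edge-connected,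
edge chromatic number 4. -/
def IsSnark {V : Type*} (G : SimpleGraph V) : Prop :=
  G.Connected ∧
  (∀ v, (G.neighborSet v).ncard = 3) ∧
  (∀ (v : V) (p : G.Walk v v), p.IsCycle → 5 ≤ p.length) ∧
  CyclicEdgeConnGe G 4 ∧
  EdgeColorable G 4 ∧ ¬ EdgeColorable G 3

/-- A bold-edge `xy` of `G`. -/
def IsBoldEdge {V : Type*} (G : SimpleGraph V) (x y : V) : Prop :=
  G.Adj x y ∧
  (∀ H, IsTwoFactor (G.induce {w | w ≠ x}) H → AllCyclesOdd H) ∧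
  (∀ H, IsTwoFactor (G.induce {w | w ≠ y}) H → AllCyclesOdd H) ∧
  (∀ H, IsTwoFactor G H → H.Adj x y → AllCyclesOdd H) ∧
  (∀ H, IsTwoFactor G H → ¬ H.Adj x y → AllCyclesOdd H)

/-- The graph `(R − {ab, cd}) + {ac, ad, bc, bd}` of condition (iv) of gadget-pairs. -/
def GadgetAux {V : Type*} (R : SimpleGraph V) (a b c d : V) : SimpleGraph V :=
  (R.deleteEdges {s(a, b), s(c, d)}) ⊔
    SimpleGraph.fromEdgeSet {s(a, c), s(a, d), s(b, c), s(b, d)}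

/-- The pair of nonadjacent edges `ab`, `cd` of `R` is a gadget-pair. -/
def IsGadgetPair {V : Type*} (R : SimpleGraph V) (a b c d : V) : Prop :=
  R.Adj a b ∧ R.Adj c d ∧ a ≠ c ∧ a ≠ d ∧ b ≠ c ∧ b ≠ d ∧
  (∀ H, IsTwoFactor R H → H.Adj a b ∨ H.Adj c d) ∧
  (∀ H, IsTwoFactor R H →
    (H.Adj a b ∧ ¬ H.Adj c d) ∨ (¬ H.Adj a b ∧ H.Adj c d) → AllCyclesOdd H) ∧
  (∀ H, IsTwoFactor R H → H.Adj a b → H.Adj c d →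
    AllCyclesOdd H ∧ ¬ H.Reachable a c) ∧
  (∀ e' ∈ ({s(a, c), s(a, d), s(b, c), s(b, d)} : Set (Sym2 V)),
    ∀ H, IsTwoFactor (GadgetAux R a b c d) H → e' ∈ H.edgeSet →
      (∀ e'' ∈ ({s(a, c), s(a, d), s(b, c), s(b, d)} : Set (Sym2 V)),
        e'' ∈ H.edgeSet → e'' = e') →
      ∀ (v : V) (p : H.Walk v v), p.IsCycle →
        (e' ∈ p.edges → Even p.length) ∧ (e' ∉ p.edges → Odd p.length))
/-- The Petersen graph, on outer vertices `Sum.inl j` and inner vertices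
`Sum.inr j` (0-based; `o_{j+1} = Sum.inl j`, `i_{j+1} = Sum.inr j`):
edges `o_j o_{j+1}`, `o_j i_j`, `i_j i_{j+2}` (indices mod 5). -/
def Petersen : SimpleGraph (Fin 5 ⊕ Fin 5) :=
  SimpleGraph.fromRel (fun p q =>
    match p, q with
    | Sum.inl i, Sum.inl j => j = i + 1
    | Sum.inr i, Sum.inr j => j = i + 2
    | Sum.inl i, Sum.inr j => i = j
    | Sum.inr _, Sum.inl _ => False)

/-- The edge set `H = {o₁i₁, i₂i₅, o₃o₄}` of the Petersen graph. -/
def PetersenH : Set (Sym2 (Fin 5 ⊕ Fin 5)) :=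
  {s(Sum.inl 0, Sum.inr 0), s(Sum.inr 1, Sum.inr 4), s(Sum.inl 2, Sum.inl 3)}

namespace SimpleGraph

variable {V : Type*} {G : SimpleGraph V}

lemma five_le_egirth (h3 : ∀ a b, G.Adj a b → ∀ c, G.Adj b c → ¬ G.Adj c a)
    (h4 : ∀ a b, G.Adj a b → ∀ c, G.Adj b c → ∀ d, G.Adj c d → G.Adj d a → a = c ∨ b = d) :
    5 ≤ G.egirth := by
  refine le_egirth.mpr fun u p hp => ?_
  have hadj : ∀ i < p.length, G.Adj (p.getVert i) (p.getVert (i + 1)) :=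
    fun i hi => p.adj_getVert_succ hi
  have hlast : p.getVert p.length = p.getVert 0 := by simp
  have h3le := hp.three_le_length
  by_contra! hlt
  have hlen : p.length = 3 ∨ p.length = 4 := by
    have : p.length < 5 := by exact_mod_cast hlt
    omega
  rcases hlen with hlen | hlen
  · rw [hlen] at hadj hlast
    exact h3 _ _ (hadj 0 (by omega)) _ (hadj 1 (by omega)) (hlast ▸ hadj 2 (by omega))
  · have hinj := hp.getVert_injOn'
    rw [hlen] at hadj hlast hinj
    rcases h4 _ _ (hadj 0 (by omega)) _ (hadj 1 (by omega)) _ (hadj 2 (by omega))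
      (hlast ▸ hadj 3 (by omega)) with h | h
    · exact absurd (hinj (by simp) (by simp) h) (by omega)
    · exact absurd (hinj (by simp) (by simp) h) (by omega)

lemma Walk.IsCycle.ncard_verts_toSubgraph {u : V} {p : G.Walk u u} (hp : p.IsCycle) :
    p.toSubgraph.verts.ncard = p.length := by
  classical
  have hverts : p.toSubgraph.verts = p.support.tail.toFinset := by
    ext w
    have hu : u ∈ p.support.tail := p.end_mem_tail_support hp.not_nil
    rw [Walk.verts_toSubgraph, Set.mem_ofPred_eq, ← p.cons_tail_support, List.coe_toFinset,
      Set.mem_ofPred_eq, List.mem_cons]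
    exact ⟨fun h => h.elim (· ▸ hu) id, Or.inr⟩
  rw [hverts, Set.ncard_coe_finset, List.toFinset_card_of_nodup hp.support_nodup,
    List.length_tail, Walk.length_support, Nat.add_sub_cancel]

lemma IsCycles.verts_toSubgraph_eq_supp [Finite V] (h : G.IsCycles) {u : V}
    {p : G.Walk u u} (hp : p.IsCycle) :
    p.toSubgraph.verts = (G.connectedComponentMk u).supp := by
  have := Fintype.ofFinite V
  classical
  obtain ⟨c, hc⟩ := p.toSubgraph_connected.exists_verts_eq_connectedComponentSupp
    fun v hv w hadj => (hp.adj_toSubgraph_iff_of_isCycles h hv w).mpr hadj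
  have hu : u ∈ c.supp := hc ▸ p.start_mem_verts_toSubgraph
  rw [hc, (c.mem_supp_iff u).mp hu]

lemma IsCycles.length_eq_ncard_supp [Finite V] (h : G.IsCycles) {u : V}
    {p : G.Walk u u} (hp : p.IsCycle) :
    p.length = (G.connectedComponentMk u).supp.ncard := by
  rw [← hp.ncard_verts_toSubgraph, h.verts_toSubgraph_eq_supp hp]

lemma le_ncard_supp_of_le_egirth [Finite V] (hreg : ∀ v, (G.neighborSet v).ncard = 2)
    {g : ℕ} (hg : g ≤ G.egirth) (c : G.ConnectedComponent) : g ≤ c.supp.ncard := by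
  obtain ⟨v, hv⟩ := c.nonempty_supp
  have hnbr : (G.neighborSet v).Nonempty := Set.nonempty_of_ncard_ne_zero (by simp [hreg v])
  obtain ⟨p, hp, hverts⟩ :=
    IsCycles.exists_cycle_toSubgraph_verts_eq_connectedComponentSupp (fun v _ => hreg v) hv hnbr
  rw [← hverts, hp.ncard_verts_toSubgraph]
  exact_mod_cast hg.trans (egirth_le_length hp)

lemma connected_of_forall_lt_two_mul_ncard_supp [Finite V] [Nonempty V]
    (h : ∀ c : G.ConnectedComponent, Nat.card V < 2 * c.supp.ncard) : G.Connected := by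
  refine (connected_iff G).mpr ⟨fun u w => ?_, ‹_›⟩
  by_contra huw
  have hne : G.connectedComponentMk u ≠ G.connectedComponentMk w :=
    fun heq => huw (ConnectedComponent.exact heq)
  have hunion := Set.ncard_union_eq (G.pairwise_disjoint_supp_connectedComponent hne)
  have hle := Set.ncard_le_card ((G.connectedComponentMk u).supp ∪ (G.connectedComponentMk w).supp)
  have hu := h (G.connectedComponentMk u)
  have hw := h (G.connectedComponentMk w)
  omega

theorem connected_and_length_eq_card_of_card_lt_two_mul_egirth [Finite V] [Nonempty V]
    (hreg : ∀ v, (G.neighborSet v).ncard = 2) {g : ℕ} (hg : g ≤ G.egirth)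
    (hcard : Nat.card V < 2 * g) :
    G.Connected ∧ ∀ u (p : G.Walk u u), p.IsCycle → p.length = Nat.card V := by
  have hconn : G.Connected := connected_of_forall_lt_two_mul_ncard_supp fun c => by
    have := le_ncard_supp_of_le_egirth hreg hg c
    omega
  refine ⟨hconn, fun u p hp => ?_⟩
  have hsupp : (G.connectedComponentMk u).supp = Set.univ :=
    Set.eq_univ_of_forall fun w => (ConnectedComponent.mem_supp_iff _ w).mpr
      (ConnectedComponent.sound (hconn.preconnected w u))
  rw [IsCycles.length_eq_ncard_supp (fun v _ => hreg v) hp, hsupp, Set.ncard_univ]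

lemma isTwoFactor_induce {F : SimpleGraph V} {s : Set V} (hle : F ≤ G)
    (hs : ∀ x y, F.Adj x y → x ∈ s) (hdeg : ∀ x ∈ s, (F.neighborSet x).ncard = 2) :
    IsTwoFactor (G.induce s) (F.induce s) := by
  refine ⟨fun _ _ h => hle h, fun x => ?_⟩
  have himage : Subtype.val '' (F.induce s).neighborSet x = F.neighborSet x := by
    ext y
    exact ⟨by rintro ⟨y, hy, rfl⟩; exact hy, fun hy => ⟨⟨y, hs y x hy.symm⟩, hy, rfl⟩⟩
  rw [← hdeg x x.2, ← himage, Set.ncard_image_of_injective _ Subtype.val_injective]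

end SimpleGraph

instance : DecidableRel Petersen.Adj := fun p q => by
  unfold Petersen
  rw [fromRel_adj]
  cases p <;> cases q <;> exact inferInstanceAs (Decidable _)

theorem petersen_five_le_egirth : 5 ≤ Petersen.egirth :=
  five_le_egirth (by decide) (by decide)

/-- Adding `j` to all indices is an automorphism of `Petersen`, so the Hamilton cycles of
`P10 − o_{j+1}` and `P10 − i_{j+1}` are rotations of those of `P10 − o₁` and `P10 − i₁`. -/
def petersenHamiltonCycle : Fin 5 ⊕ Fin 5 → List (Fin 5 ⊕ Fin 5)
  | .inl j => [.inl 1, .inl 2, .inl 3, .inl 4, .inr 4, .inr 2, .inr 0, .inr 3, .inr 1].map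
      (Sum.map (· + j) (· + j))
  | .inr j => [.inl 0, .inl 1, .inr 1, .inr 3, .inl 3, .inl 2, .inr 2, .inr 4, .inl 4].map
      (Sum.map (· + j) (· + j))

def petersenHamiltonFactor (v : Fin 5 ⊕ Fin 5) : SimpleGraph (Fin 5 ⊕ Fin 5) :=
  fromRel fun x y => (petersenHamiltonCycle v).formPerm x = y

instance (v : Fin 5 ⊕ Fin 5) : DecidableRel (petersenHamiltonFactor v).Adj := fun x y => by
  unfold petersenHamiltonFactor
  rw [fromRel_adj]
  infer_instance

theorem exists_isTwoFactor_petersen_induce (v : Fin 5 ⊕ Fin 5) :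
    ∃ H, IsTwoFactor (Petersen.induce {w | w ≠ v}) H := by
  have hle : ∀ v x y, (petersenHamiltonFactor v).Adj x y → Petersen.Adj x y := by decide
  have havoid : ∀ v x y, (petersenHamiltonFactor v).Adj x y → x ≠ v := by decide
  have hdeg : ∀ v x, x ≠ v → ((petersenHamiltonFactor v).neighborFinset x).card = 2 := by
    decide
  refine ⟨_, isTwoFactor_induce (hle v) (havoid v) fun x hx => ?_⟩
  rw [← coe_neighborFinset, Set.ncard_coe_finset, hdeg v x hx]

/-- For every vertex `v` of the Petersen graph, `P10 − v` has a
2-factor, and every 2-factor of `P10 − v` is a Hamilton cycle of `P10 − v`,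
i.e. a single cycle of length 9. -/
theorem petersen_deleteVert_twoFactors_are_nine_cycles :
    ∀ v : Fin 5 ⊕ Fin 5,
      (∃ H, IsTwoFactor (Petersen.induce {w | w ≠ v}) H) ∧
      (∀ H, IsTwoFactor (Petersen.induce {w | w ≠ v}) H →
        H.Connected ∧ ∀ (u) (p : H.Walk u u), p.IsCycle → p.length = 9) := by
  intro v
  refine ⟨exists_isTwoFactor_petersen_induce v, fun H hH => ?_⟩
  have hcard : Nat.card {w | w ≠ v} = 9 := by
    rw [Nat.card_coe_set_eq, ← Set.compl_singleton_eq, Set.ncard_compl]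
    simp
  have : Nonempty {w | w ≠ v} := (Nat.card_pos_iff.mp (by omega)).1
  have hcontained : H ⊑ Petersen :=
    (IsContained.of_le hH.1).trans ⟨(Embedding.induce _).toCopy⟩
  have hgirth : ((5 : ℕ) : ℕ∞) ≤ H.egirth := petersen_five_le_egirth.trans hcontained.egirth_le
  rw [← hcard]
  exact connected_and_length_eq_card_of_card_lt_two_mul_egirth hH.2 hgirth (by omega)
end

section
/- The graph obtained from the Petersen graph P10 by deleting the three edges of H (keeping all vertices) is bipartite. -/
open SimpleGraph

-- Colour 1 is `{o₂, o₅, i₃, i₄}`: deleting `o₃o₄` and `i₂i₅` opens both 5-cycles into paths.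
def petersenDeleteHColoring : (Petersen.deleteEdges PetersenH).Coloring (Fin 2) :=
  Coloring.mk (Sum.elim ![0, 1, 0, 0, 1] ![0, 0, 1, 1, 0]) <| by
    rintro (v | v) (w | w) <;>
      simp only [deleteEdges_adj, PetersenH, Petersen, fromRel_adj, Set.mem_insert_iff,
        Set.mem_singleton_iff, Sum.elim_inl, Sum.elim_inr] <;>
      revert v w <;> decide

/-- The graph obtained from the Petersen graph by deleting the
three edges of `H` (keeping all vertices) is bipartite. -/
theorem petersen_deleteH_bipartite :
    (Petersen.deleteEdges PetersenH).Colorable 2 :=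
  ⟨petersenDeleteHColoring⟩
end

section
/- For any two distinct edges f, g of H, the graph P10 − {f, g} (delete the two edges, keep all vertices) has no 2-factor. -/
/-! In `P10 − {f, g}` the four endpoints of `f` and `g` have degree two, so a 2-factor must use
both of their remaining edges. In each of the three cases this saturates two of the three
neighbours of some vertex `w` with edges avoiding `w`, leaving `w` at most one edge of the
2-factor. -/

open SimpleGraph

open Sum

namespace IsTwoFactor

variable {V : Type*} {G H : SimpleGraph V} {v w x y u a b p q p' q' : V}

theorem neighborSet_eq_pair (hH : IsTwoFactor G H) (hab : a ≠ b) (ha : H.Adj v a)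
    (hb : H.Adj v b) : H.neighborSet v = {a, b} := by
  have hsub : {a, b} ⊆ H.neighborSet v := Set.insert_subset ha (Set.singleton_subset_iff.2 hb)
  have hfin : (H.neighborSet v).Finite := Set.finite_of_ncard_ne_zero (by rw [hH.2 v]; norm_num)
  exact (Set.eq_of_subset_of_ncard_le hsub (by rw [hH.2 v, Set.ncard_pair hab]) hfin).symm

theorem adj_of_forall_adj (hH : IsTwoFactor G H) (hv : ∀ z, G.Adj v z → z = a ∨ z = b) :
    H.Adj v a := by
  have hsub : H.neighborSet v ⊆ {a, b} := fun z hz => hv z (hH.1 hz)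
  have hcard : ({a, b} : Set V).ncard ≤ (H.neighborSet v).ncard := by
    rw [hH.2 v]
    exact (Set.ncard_insert_le a {b}).trans (by rw [Set.ncard_singleton])
  rw [← mem_neighborSet, Set.eq_of_subset_of_ncard_le hsub hcard (Set.toFinite _)]
  exact Set.mem_insert a {b}

theorem not_adj_of_forall_adj (hH : IsTwoFactor G H) (hpq : p ≠ q) (hwp : w ≠ p) (hwq : w ≠ q)
    (hp : ∀ z, G.Adj p z → z = x ∨ z = p') (hq : ∀ z, G.Adj q z → z = x ∨ z = q') :
    ¬ H.Adj x w := by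
  intro hxw
  have hw : w ∈ H.neighborSet x := hxw
  rw [hH.neighborSet_eq_pair hpq (hH.adj_of_forall_adj hp).symm
    (hH.adj_of_forall_adj hq).symm] at hw
  exact hw.elim hwp hwq

theorem adj_of_not_adj (hH : IsTwoFactor G H) (hw : ∀ z, G.Adj w z → z = u ∨ z = x ∨ z = y)
    (hx : ¬ H.Adj w x) : H.Adj w y := by
  obtain ⟨z, hz, hzu⟩ := Set.exists_ne_of_one_lt_ncard (by rw [hH.2 w]; norm_num) u
  rcases hw z (hH.1 hz) with rfl | rfl | rfl
  · exact absurd rfl hzu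
  · exact absurd hz hx
  · exact hz

end IsTwoFactor

-- `(fromRel r).Adj p q` unfolds definitionally to `p ≠ q ∧ (r p q ∨ r q p)`.
instance inst_s4 : DecidableRel Petersen.Adj
  | inl i, inl j => inferInstanceAs (Decidable (_ ∧ (j = i + 1 ∨ i = j + 1)))
  | inr i, inr j => inferInstanceAs (Decidable (_ ∧ (j = i + 2 ∨ i = j + 2)))
  | inl i, inr j => inferInstanceAs (Decidable (_ ∧ (i = j ∨ False)))
  | inr i, inl j => inferInstanceAs (Decidable (_ ∧ (False ∨ j = i)))

theorem Petersen.not_isTwoFactor_deleteEdges_o₁i₁_i₂i₅ {H : SimpleGraph (Fin 5 ⊕ Fin 5)} :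
    ¬ IsTwoFactor (Petersen.deleteEdges {s(inl 0, inr 0), s(inr 1, inr 4)}) H := by
  intro hH
  have ho₂ : ¬ H.Adj (inl 1) (inl 2) :=
    hH.not_adj_of_forall_adj (p := inl 0) (q := inr 1) (p' := inl 4) (q' := inr 3)
      (by decide) (by decide) (by decide) (by decide) (by decide)
  have hi₃ : ¬ H.Adj (inr 2) (inl 2) :=
    hH.not_adj_of_forall_adj (p := inr 0) (q := inr 4) (p' := inr 3) (q' := inl 4)
      (by decide) (by decide) (by decide) (by decide) (by decide)
  exact hi₃ (hH.adj_of_not_adj (u := inl 3) (by decide) (ho₂ ·.symm)).symm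

theorem Petersen.not_isTwoFactor_deleteEdges_o₁i₁_o₃o₄ {H : SimpleGraph (Fin 5 ⊕ Fin 5)} :
    ¬ IsTwoFactor (Petersen.deleteEdges {s(inl 0, inr 0), s(inl 2, inl 3)}) H := by
  intro hH
  have ho₂ : ¬ H.Adj (inl 1) (inr 1) :=
    hH.not_adj_of_forall_adj (p := inl 0) (q := inl 2) (p' := inl 4) (q' := inr 2)
      (by decide) (by decide) (by decide) (by decide) (by decide)
  have hi₄ : ¬ H.Adj (inr 3) (inr 1) :=
    hH.not_adj_of_forall_adj (p := inr 0) (q := inl 3) (p' := inr 2) (q' := inl 4)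
      (by decide) (by decide) (by decide) (by decide) (by decide)
  exact hi₄ (hH.adj_of_not_adj (u := inr 4) (by decide) (ho₂ ·.symm)).symm

theorem Petersen.not_isTwoFactor_deleteEdges_i₂i₅_o₃o₄ {H : SimpleGraph (Fin 5 ⊕ Fin 5)} :
    ¬ IsTwoFactor (Petersen.deleteEdges {s(inr 1, inr 4), s(inl 2, inl 3)}) H := by
  intro hH
  have hi₃ : ¬ H.Adj (inr 2) (inr 0) :=
    hH.not_adj_of_forall_adj (p := inr 4) (q := inl 2) (p' := inl 4) (q' := inl 1)
      (by decide) (by decide) (by decide) (by decide) (by decide)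
  have hi₄ : ¬ H.Adj (inr 3) (inr 0) :=
    hH.not_adj_of_forall_adj (p := inr 1) (q := inl 3) (p' := inl 1) (q' := inl 4)
      (by decide) (by decide) (by decide) (by decide) (by decide)
  exact hi₄ (hH.adj_of_not_adj (u := inl 0) (by decide) (hi₃ ·.symm)).symm

/-- For any two distinct edges `f, g` of `H`, the graph
`P10 − {f, g}` (edges deleted, all vertices kept) has no 2-factor. -/
theorem petersen_delete_two_H_edges_no_twoFactor :
    ∀ f g : Sym2 (Fin 5 ⊕ Fin 5), f ∈ PetersenH → g ∈ PetersenH → f ≠ g →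
      ¬ ∃ H, IsTwoFactor (Petersen.deleteEdges {f, g}) H := by
  rintro f g hf hg hfg ⟨H, hH⟩
  simp only [PetersenH, Set.mem_insert_iff, Set.mem_singleton_iff] at hf hg
  rcases hf with rfl | rfl | rfl <;> rcases hg with rfl | rfl | rfl
  all_goals first
    | exact absurd rfl hfg
    | exact Petersen.not_isTwoFactor_deleteEdges_o₁i₁_i₂i₅ hH
    | exact Petersen.not_isTwoFactor_deleteEdges_o₁i₁_o₃o₄ hH
    | exact Petersen.not_isTwoFactor_deleteEdges_i₂i₅_o₃o₄ hH
    | exact Petersen.not_isTwoFactor_deleteEdges_o₁i₁_i₂i₅ (Set.pair_comm _ _ ▸ hH)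
    | exact Petersen.not_isTwoFactor_deleteEdges_o₁i₁_o₃o₄ (Set.pair_comm _ _ ▸ hH)
    | exact Petersen.not_isTwoFactor_deleteEdges_i₂i₅_o₃o₄ (Set.pair_comm _ _ ▸ hH)
end

section
/- The snark P34 has no bold-edge; equivalently, for every vertex v of P34 there is a 2-factor of P34 − v containing a cycle of even length. -/
open SimpleGraph

/-- The graph `P34`, 0-based labelling: vertex `k` corresponds to vertex `k+1`
of the paper's labelling. -/
def P34 : SimpleGraph (Fin 34) :=
  SimpleGraph.fromEdgeSet
    {s(4,5), s(4,9), s(5,6), s(5,7), s(6,13), s(7,8), s(7,11), s(8,9), s(8,13),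
     s(9,10), s(10,11), s(11,12), s(12,13), s(0,4), s(3,10), s(2,12), s(1,6),
     s(14,15), s(14,19), s(15,16), s(15,17), s(16,23), s(17,18), s(17,21),
     s(18,19), s(18,23), s(19,20), s(20,21), s(21,22), s(22,23), s(14,3),
     s(22,2), s(20,1), s(0,16), s(24,25), s(24,33), s(25,26), s(25,27),
     s(26,29), s(27,28), s(27,31), s(28,29), s(28,33), s(29,30), s(30,31),
     s(31,32), s(32,33), s(32,1), s(26,2), s(30,3), s(0,24)}

/-!
Condition (i) of a bold-edge already fails at every vertex: for each `v`, the graph `P34 − v`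
has a 2-factor with an even cycle. A permutation `σ` that moves every vertex along an edge and
has no 2-cycles turns its functional graph into a 2-factor, and the orbit of a point of period
`k ≥ 3` is a cycle of length `k` in it. For `P34` the permutations are given by listing the cycles
of suitable 2-factors, and the required properties are checked by evaluation in the kernel.
-/

open Function

theorem Function.IsPeriodicPt.minimalPeriod_eq_of_forall_lt {α : Type*} {f : α → α} {x : α}
    {k : ℕ} (hk : 0 < k) (hx : IsPeriodicPt f k x) (hmin : ∀ i < k, 0 < i → f^[i] x ≠ x) :
    minimalPeriod f x = k := by
  by_contra hne
  exact hmin _ (lt_of_le_of_ne (hx.minimalPeriod_le hk) hne) (hx.minimalPeriod_pos hk)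
    iterate_minimalPeriod

theorem Equiv.Perm.minimalPeriod_subtypePerm {α : Type*} {p : α → Prop} (σ : Equiv.Perm α)
    (h : ∀ x, p (σ x) ↔ p x) (x : Subtype p) :
    minimalPeriod (σ.subtypePerm h) x = minimalPeriod σ x := by
  refine minimalPeriod_eq_minimalPeriod_iff.2 fun n => ?_
  simp only [IsPeriodicPt, IsFixedPt, ← Equiv.Perm.coe_pow, Equiv.Perm.subtypePerm_pow,
    Subtype.ext_iff, Equiv.Perm.subtypePerm_apply]

namespace SimpleGraph

variable {V : Type*}

def functionalGraph (f : V → V) : SimpleGraph V :=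
  fromRel fun a b => f a = b

theorem functionalGraph_adj {f : V → V} {a b : V} :
    (functionalGraph f).Adj a b ↔ a ≠ b ∧ (f a = b ∨ f b = a) :=
  fromRel_adj _ a b

theorem neighborSet_functionalGraph_perm (σ : Equiv.Perm V) {a : V} (ha : σ a ≠ a) :
    (functionalGraph σ).neighborSet a = {σ a, σ.symm a} := by
  ext b
  simp only [mem_neighborSet, functionalGraph_adj, Set.mem_insert_iff, Set.mem_singleton_iff]
  constructor
  · rintro ⟨-, rfl | rfl⟩
    · exact Or.inl rfl
    · exact Or.inr (σ.symm_apply_apply b).symm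
  · rintro (rfl | rfl)
    · exact ⟨ha.symm, Or.inl rfl⟩
    · exact ⟨fun h => ha (σ.eq_symm_apply.1 h), Or.inr (σ.apply_symm_apply a)⟩

theorem isTwoFactor_functionalGraph {G : SimpleGraph V} (σ : Equiv.Perm V)
    (hadj : ∀ a, G.Adj a (σ a)) (hσ : ∀ a, σ (σ a) ≠ a) :
    IsTwoFactor G (functionalGraph σ) := by
  refine ⟨fun a b hab => ?_, fun a => ?_⟩
  · obtain ⟨-, rfl | rfl⟩ := functionalGraph_adj.1 hab
    exacts [hadj a, (hadj b).symm]
  · rw [neighborSet_functionalGraph_perm σ (hadj a).ne.symm, Set.ncard_pair]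
    exact fun h => hσ a (σ.eq_symm_apply.1 h)

theorem cycleGraph_minimalPeriod_isContained (f : V → V) (u : V) :
    cycleGraph (minimalPeriod f u) ⊑ functionalGraph f := by
  set k := minimalPeriod f u
  have hinj : Injective fun i : Fin k => f^[i] u :=
    fun i j h => Fin.ext (iterate_injOn_Iio_minimalPeriod i.2 j.2 h)
  have hsucc : ∀ i j : Fin k, (j - i).val = 1 → f^[j] u = f (f^[i] u) := by
    intro i j h
    rw [Fin.val_sub] at h
    calc f^[j] u = f^[j + k] u := iterate_add_minimalPeriod_eq.symm
      _ = f^[i] (f^[k - i + j] u) := by rw [← iterate_add_apply]; congr 1; omega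
      _ = f^[i] (f^[(k - i + j) % k] u) := by rw [iterate_mod_minimalPeriod_eq]
      _ = f (f^[i] u) := by rw [h, iterate_one, ← iterate_succ_apply, iterate_succ_apply']
  refine ⟨⟨⟨fun i => f^[i] u, fun {i j} hij => ?_⟩, hinj⟩⟩
  refine functionalGraph_adj.2 ⟨hinj.ne hij.ne, ?_⟩
  rcases cycleGraph_adj'.1 hij with h | h
  · exact Or.inr (hsucc j i h).symm
  · exact Or.inl (hsucc i j h).symm

def HasEvenCycleTwoFactorOfDelete (G : SimpleGraph V) (v : V) : Prop :=
  ∃ H, IsTwoFactor (G.induce {w | w ≠ v}) H ∧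
    ∃ (x : {w // w ∈ {w | w ≠ v}}) (p : H.Walk x x), p.IsCycle ∧ Even p.length

theorem hasEvenCycleTwoFactorOfDelete_of_perm [Finite V] {G : SimpleGraph V} {v u : V}
    (σ : Equiv.Perm V) (hv : σ v = v)
    (hσ : ∀ a, a ≠ v → G.Adj a (σ a) ∧ σ (σ a) ≠ a) (heven : Even (minimalPeriod σ u)) :
    G.HasEvenCycleTwoFactorOfDelete v := by
  have hu : u ≠ v := by
    rintro rfl
    rw [minimalPeriod_eq_one_iff_isFixedPt.2 hv] at heven
    exact Nat.not_even_one heven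
  let τ := σ.subtypePerm (p := (· ∈ {w | w ≠ v})) fun x => (σ.injective.eq_iff' hv).not
  have hperiod : minimalPeriod τ ⟨u, hu⟩ = minimalPeriod σ u := σ.minimalPeriod_subtypePerm _ _
  have hpos : 0 < minimalPeriod σ u :=
    minimalPeriod_pos_of_mem_periodicPts (σ.injective.mem_periodicPts u)
  have hne_two : minimalPeriod σ u ≠ 2 := by
    intro h
    have hper := iterate_minimalPeriod (f := σ) (x := u)
    rw [h] at hper
    exact (hσ u hu).2 hper
  have hthree : 2 < minimalPeriod τ ⟨u, hu⟩ := by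
    obtain ⟨r, hr⟩ := heven
    omega
  obtain ⟨x, p, hp, hlen⟩ := (cycleGraph_isContained_iff hthree).1
    (cycleGraph_minimalPeriod_isContained τ ⟨u, hu⟩)
  refine ⟨_, isTwoFactor_functionalGraph τ (fun a => (hσ a a.2).1)
    (fun a h => (hσ a a.2).2 (congrArg Subtype.val h)), x, p, hp, ?_⟩
  rwa [hlen, hperiod]

theorem HasEvenCycleTwoFactorOfDelete.not_isBoldEdge {G : SimpleGraph V} {x : V}
    (h : G.HasEvenCycleTwoFactorOfDelete x) (y : V) :
    ¬ IsBoldEdge G x y := by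
  obtain ⟨H, hH, u, p, hp, heven⟩ := h
  exact fun hb => Nat.not_odd_iff_even.2 heven (hb.2.1 H hH u p hp)

end SimpleGraph

section Certificate

variable {V : Type*} [DecidableEq V]

def cyclesPerm (cs : List (List V)) : Equiv.Perm V :=
  (cs.map List.formPerm).prod

/-- `cs` lists the cycles of a 2-factor of `G − v`, the first of which is claimed to be even. -/
def IsEvenTwoFactorCert (G : SimpleGraph V) [DecidableRel G.Adj] (v : V)
    (cs : List (List V)) : Prop :=
  let σ := cyclesPerm cs
  let c := cs.headD []
  let u := c.headD v
  σ v = v ∧ (∀ a, a ≠ v → G.Adj a (σ a) ∧ σ (σ a) ≠ a) ∧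
    Even c.length ∧ 0 < c.length ∧ σ^[c.length] u = u ∧ ∀ i < c.length, 0 < i → σ^[i] u ≠ u

instance [Fintype V] (G : SimpleGraph V) [DecidableRel G.Adj] (v : V) (cs : List (List V)) :
    Decidable (IsEvenTwoFactorCert G v cs) := by
  unfold IsEvenTwoFactorCert
  infer_instance

theorem IsEvenTwoFactorCert.hasEvenCycleTwoFactorOfDelete [Finite V] {G : SimpleGraph V}
    [DecidableRel G.Adj] {v : V} {cs : List (List V)} (h : IsEvenTwoFactorCert G v cs) :
    G.HasEvenCycleTwoFactorOfDelete v := by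
  obtain ⟨hv, hσ, heven, hpos, hper, hmin⟩ := h
  refine hasEvenCycleTwoFactorOfDelete_of_perm (u := (cs.headD []).headD v) _ hv hσ ?_
  rwa [IsPeriodicPt.minimalPeriod_eq_of_forall_lt hpos hper hmin]

end Certificate

set_option synthInstance.maxSize 1000 in
instance P34.decidableAdj : DecidableRel P34.Adj := fun a b =>
  inferInstanceAs (Decidable (s(a, b) ∈ _ ∧ a ≠ b))

/-- The cycles of a 2-factor of `P34 − v`, an even cycle first. -/
def P34Cycles : Fin 34 → List (List (Fin 34)) := ![
  [[1, 32, 33, 24, 25, 26, 2, 12, 13, 6, 5, 4, 9, 8, 7, 11, 10, 3, 14, 15, 16, 23, 22, 21, 17, 18,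
    19, 20], [27, 28, 29, 30, 31]],
  [[0, 16, 15, 14, 19, 20, 21, 17, 18, 23, 22, 2, 12, 13, 6, 5, 4, 9, 8, 7, 11, 10, 3, 30, 29, 26,
    25, 24], [27, 28, 33, 32, 31]],
  [[0, 16, 15, 14, 19, 20, 1, 6, 5, 4, 9, 10, 3, 30, 29, 26, 25, 24], [7, 8, 13, 12, 11],
    [17, 18, 23, 22, 21], [27, 28, 33, 32, 31]],
  [[0, 16, 15, 14, 19, 20, 1, 6, 5, 4, 9, 10, 11, 7, 8, 13, 12, 2, 26, 29, 30, 31, 32, 33, 28, 27,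
    25, 24], [17, 18, 23, 22, 21]],
  [[0, 16, 23, 18, 19, 20, 1, 32, 33, 28, 29, 26, 2, 22, 21, 17, 15, 14, 3, 30, 31, 27, 25, 24],
    [5, 6, 13, 12, 11, 10, 9, 8, 7]],
  [[0, 16, 15, 14, 19, 20, 1, 6, 13, 12, 2, 26, 25, 24, 33, 32, 31, 27, 28, 29, 30, 3, 10, 11, 7,
    8, 9, 4], [17, 18, 23, 22, 21]],
  [[0, 16, 23, 18, 19, 20, 1, 32, 33, 28, 29, 26, 2, 22, 21, 17, 15, 14, 3, 30, 31, 27, 25, 24],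
    [4, 9, 10, 11, 12, 13, 8, 7, 5]],
  [[0, 16, 15, 14, 19, 20, 1, 32, 33, 28, 29, 26, 2, 12, 11, 10, 3, 30, 31, 27, 25, 24],
    [4, 9, 8, 13, 6, 5], [17, 18, 23, 22, 21]],
  [[1, 32, 33, 28, 29, 26, 2, 12, 13, 6], [4, 9, 10, 11, 7, 5],
    [0, 16, 23, 22, 21, 20, 19, 18, 17, 15, 14, 3, 30, 31, 27, 25, 24]],
  [[0, 24, 25, 26, 29, 30, 3, 10, 11, 7, 8, 13, 12, 2, 22, 23, 16, 15, 14, 19, 18, 17, 21, 20, 1,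
    6, 5, 4], [27, 28, 33, 32, 31]],
  [[0, 16, 23, 18, 19, 20, 1, 32, 33, 28, 29, 26, 2, 22, 21, 17, 15, 14, 3, 30, 31, 27, 25, 24],
    [4, 9, 8, 7, 11, 12, 13, 6, 5]],
  [[0, 16, 15, 14, 19, 20, 1, 6, 13, 12, 2, 26, 25, 24, 33, 32, 31, 27, 28, 29, 30, 3, 10, 9, 8,
    7, 5, 4], [17, 18, 23, 22, 21]],
  [[0, 16, 23, 18, 19, 20, 1, 32, 33, 28, 29, 26, 2, 22, 21, 17, 15, 14, 3, 30, 31, 27, 25, 24],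
    [4, 9, 10, 11, 7, 8, 13, 6, 5]],
  [[0, 24, 25, 26, 29, 30, 3, 10, 9, 8, 7, 11, 12, 2, 22, 23, 16, 15, 14, 19, 18, 17, 21, 20, 1,
    6, 5, 4], [27, 28, 33, 32, 31]],
  [[0, 16, 15, 17, 21, 20, 19, 18, 23, 22, 2, 26, 29, 28, 33, 32, 1, 6, 5, 4, 9, 10, 3, 30, 31,
    27, 25, 24], [7, 8, 13, 12, 11]],
  [[0, 16, 23, 22, 2, 12, 13, 8, 7, 11, 10, 9, 4, 5, 6, 1, 20, 21, 17, 18, 19, 14, 3, 30, 29, 26,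
    25, 24], [27, 28, 33, 32, 31]],
  [[0, 24, 25, 27, 31, 30, 3, 14, 15, 17, 21, 22, 23, 18, 19, 20, 1, 32, 33, 28, 29, 26, 2, 12,
    13, 6, 5, 4], [7, 8, 9, 10, 11]],
  [[0, 16, 15, 14, 3, 30, 31, 27, 25, 24], [18, 19, 20, 21, 22, 23],
    [1, 32, 33, 28, 29, 26, 2, 12, 13, 8, 7, 11, 10, 9, 4, 5, 6]],
  [[0, 16, 23, 22, 2, 26, 29, 28, 33, 32, 1, 6, 5, 4, 9, 10, 3, 30, 31, 27, 25, 24],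
    [14, 19, 20, 21, 17, 15], [7, 8, 13, 12, 11]],
  [[0, 16, 15, 14, 3, 30, 29, 26, 25, 24],
    [1, 20, 21, 17, 18, 23, 22, 2, 12, 13, 8, 7, 11, 10, 9, 4, 5, 6], [27, 28, 33, 32, 31]],
  [[0, 16, 15, 17, 21, 22, 23, 18, 19, 14, 3, 30, 31, 27, 25, 24],
    [1, 32, 33, 28, 29, 26, 2, 12, 13, 8, 7, 11, 10, 9, 4, 5, 6]],
  [[0, 16, 23, 22, 2, 12, 13, 8, 7, 11, 10, 9, 4, 5, 6, 1, 20, 19, 18, 17, 15, 14, 3, 30, 29, 26,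
    25, 24], [27, 28, 33, 32, 31]],
  [[0, 16, 23, 18, 19, 20, 21, 17, 15, 14, 3, 30, 31, 27, 25, 24],
    [1, 32, 33, 28, 29, 26, 2, 12, 13, 8, 7, 11, 10, 9, 4, 5, 6]],
  [[0, 16, 15, 14, 3, 30, 29, 26, 25, 24],
    [1, 20, 19, 18, 17, 21, 22, 2, 12, 13, 8, 7, 11, 10, 9, 4, 5, 6], [27, 28, 33, 32, 31]],
  [[0, 16, 23, 18, 19, 20, 1, 32, 33, 28, 29, 26, 25, 27, 31, 30, 3, 14, 15, 17, 21, 22, 2, 12,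
    13, 6, 5, 4], [7, 8, 9, 10, 11]],
  [[0, 16, 15, 14, 19, 20, 1, 32, 33, 24],
    [2, 26, 29, 28, 27, 31, 30, 3, 10, 11, 7, 8, 9, 4, 5, 6, 13, 12], [17, 18, 23, 22, 21]],
  [[0, 16, 23, 18, 19, 20, 1, 32, 33, 28, 29, 30, 31, 27, 25, 24],
    [2, 12, 13, 6, 5, 4, 9, 8, 7, 11, 10, 3, 14, 15, 17, 21, 22]],
  [[0, 16, 23, 18, 19, 20, 1, 6, 5, 4, 9, 10, 3, 14, 15, 17, 21, 22, 2, 26, 25, 24],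
    [28, 33, 32, 31, 30, 29], [7, 8, 13, 12, 11]],
  [[0, 16, 23, 18, 19, 20, 1, 32, 33, 24], [25, 26, 29, 30, 31, 27],
    [2, 12, 13, 6, 5, 4, 9, 8, 7, 11, 10, 3, 14, 15, 17, 21, 22]],
  [[0, 16, 15, 14, 19, 20, 1, 32, 33, 28, 27, 31, 30, 3, 10, 11, 7, 8, 9, 4, 5, 6, 13, 12, 2, 26,
    25, 24], [17, 18, 23, 22, 21]],
  [[0, 16, 23, 18, 19, 20, 1, 32, 31, 27, 25, 26, 29, 28, 33, 24],
    [2, 12, 13, 6, 5, 4, 9, 8, 7, 11, 10, 3, 14, 15, 17, 21, 22]],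
  [[0, 16, 15, 14, 19, 20, 1, 32, 33, 24],
    [2, 26, 25, 27, 28, 29, 30, 3, 10, 11, 7, 8, 9, 4, 5, 6, 13, 12], [17, 18, 23, 22, 21]],
  [[0, 16, 23, 18, 19, 20, 1, 6, 5, 4, 9, 10, 3, 14, 15, 17, 21, 22, 2, 26, 25, 27, 31, 30, 29,
    28, 33, 24], [7, 8, 13, 12, 11]],
  [[0, 16, 15, 14, 19, 20, 1, 32, 31, 27, 28, 29, 30, 3, 10, 11, 7, 8, 9, 4, 5, 6, 13, 12, 2, 26,
    25, 24], [17, 18, 23, 22, 21]]]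

theorem P34_isEvenTwoFactorCert : ∀ v, IsEvenTwoFactorCert P34 v (P34Cycles v) := by
  decide +kernel

/-- The snark `P34` has no bold-edge; equivalently, for every
vertex `v` of `P34` there is a 2-factor of `P34 − v` containing a cycle of even
length. -/
theorem P34_no_boldEdge :
    (∀ x y : Fin 34, ¬ IsBoldEdge P34 x y) ∧
    (∀ v : Fin 34, ∃ H, IsTwoFactor (P34.induce {w | w ≠ v}) H ∧
      ∃ (u : {w : Fin 34 // w ∈ {w | w ≠ v}}) (p : H.Walk u u),
        p.IsCycle ∧ Even p.length) := by
  have h v := (P34_isEvenTwoFactorCert v).hasEvenCycleTwoFactorOfDelete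
  exact ⟨fun x => (h x).not_isBoldEdge, h⟩
end

section
/- For every odd integer t ≥ 5, every perfect matching of the Flower snark J(t) contains exactly one edge from each link L_i (i = 1,…,t); consequently every 2-factor of J(t) contains exactly two edges from each link L_i. -/
open SimpleGraph

/-- The Flower snark `J(t)` on vertex set `Fin t × Fin 4`, where `(i, 0) = h_{i+1}`,
`(i, 1) = u_{i+1}`, `(i, 2) = v_{i+1}`, `(i, 3) = w_{i+1}` (0-based indices):
`h_i` is adjacent to `u_i, v_i, w_i`; `u_i u_{i+1}`, `v_i v_{i+1}`, `w_i w_{i+1}`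
for `i = 1, …, t−1`; and `u_t v_1`, `v_t u_1`, `w_t w_1`. -/
def FlowerSnark (t : ℕ) : SimpleGraph (Fin t × Fin 4) :=
  SimpleGraph.fromRel (fun p q =>
    (p.2 = 0 ∧ q.2 ≠ 0 ∧ p.1 = q.1) ∨
    (p.2 ≠ 0 ∧ p.2 = q.2 ∧ (q.1 : ℕ) = (p.1 : ℕ) + 1) ∨
    ((p.1 : ℕ) = t - 1 ∧ (q.1 : ℕ) = 0 ∧
      ((p.2 = 1 ∧ q.2 = 2) ∨ (p.2 = 2 ∧ q.2 = 1) ∨ (p.2 = 3 ∧ q.2 = 3))))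

/-- The `i`-th link of the Flower snark `J(t)`:
`L_i = {u_i u_{i+1}, v_i v_{i+1}, w_i w_{i+1}}` for `i = 1, …, t−1`, and
`L_t = {u_t v_1, v_t u_1, w_t w_1}` (0-based indices). -/
def FlowerLink (t : ℕ) [NeZero t] (i : Fin t) : Set (Sym2 (Fin t × Fin 4)) :=
  if (i : ℕ) = t - 1 then
    {s((i, 1), ((0 : Fin t), 2)), s((i, 2), ((0 : Fin t), 1)),
     s((i, 3), ((0 : Fin t), 3))}
  else
    {s((i, 1), (i + 1, 1)), s((i, 2), (i + 1, 2)), s((i, 3), (i + 1, 3))}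

/-!
Let `H` be a `d`-regular spanning subgraph of `J(t)` and `x_i = |L_i ∩ E(H)|`. The leaves
`u_{i+1}, v_{i+1}, w_{i+1}` of the claw at `h_{i+1}` have degree sum `3d` in `H`; exactly `d`
of these edges go to `h_{i+1}` and all others lie in `L_i ∪ L_{i+1}`, so `x_i + x_{i+1} = 2d`.
Around a cycle of odd length this forces `x_i = d` for every `i`; take `d = 1` and `d = 2`.
-/

open Fin.NatCast Fin.CommRing in
theorem Fin.apply_eq_apply_of_add_apply_add_one_eq {M : Type*} [AddCancelCommMonoid M] {t : ℕ}
    [NeZero t] (ht : Odd t) {f : Fin t → M} {c : M} (hf : ∀ i, f i + f (i + 1) = c)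
    (i j : Fin t) : f i = f j := by
  have two_periodic (i : Fin t) : f (i + 2) = f i := by
    apply add_left_cancel (a := f (i + 1))
    rw [add_comm (f (i + 1)) (f i), hf, ← one_add_one_eq_two, ← add_assoc, hf]
  have even_periodic (n : ℕ) : f (i + 2 * n) = f i := by
    induction n with
    | zero => simp
    | succ n ih => rw [← ih, ← two_periodic (i + 2 * n)]; congr 1; push_cast; ring
  obtain ⟨k, rfl⟩ := ht
  -- `2` is invertible modulo an odd number, so every `j` is reached from `i` in steps of `2`.
  have two_mul_inv : (2 * (k + 1) : Fin (2 * k + 1)) = 1 := by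
    have := Fin.natCast_self (2 * k + 1); push_cast at this; linear_combination this
  have : i + 2 * ((k * (j - i).val + (j - i).val : ℕ) : Fin (2 * k + 1)) = j := by
    push_cast [Fin.cast_val_eq_self]
    linear_combination (j - i) * two_mul_inv
  rw [← this, even_periodic]

theorem Fin.val_add_one_eq_ite {t : ℕ} [NeZero t] (i : Fin t) :
    ((i + 1 : Fin t) : ℕ) = if (i : ℕ) = t - 1 then 0 else (i : ℕ) + 1 := by
  have := i.isLt
  rw [Fin.val_add, Fin.val_one', Nat.add_mod_mod]
  split_ifs with h
  · rw [h, Nat.sub_add_cancel (by omega), Nat.mod_self]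
  · exact Nat.mod_eq_of_lt (by omega)

theorem SimpleGraph.ncard_neighborSet_eq_sum {V : Type*} {H : SimpleGraph V} {v : V}
    [DecidablePred (H.Adj v)] {s : Finset V} (hs : ∀ w, H.Adj v w → w ∈ s) :
    (H.neighborSet v).ncard = ∑ w ∈ s, if H.Adj v w then 1 else 0 := by
  rw [Finset.sum_boole, Nat.cast_id, ← Set.ncard_coe_finset]
  congr 1
  ext w
  simpa using fun h => hs w h

theorem Set.ncard_image_inter_eq_sum {α β : Type*} {f : α → β} (hf : f.Injective)
    (s : Finset α) (E : Set β) [DecidablePred (· ∈ E)] :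
    (f '' s ∩ E).ncard = ∑ a ∈ s, if f a ∈ E then 1 else 0 := by
  rw [← Set.image_inter_preimage, Set.ncard_image_of_injective _ hf, Finset.sum_boole,
    Nat.cast_id, ← Set.ncard_coe_finset, Finset.coe_filter]
  rfl

theorem Fin.mem_one_two_three_iff_ne_zero {c : Fin 4} :
    c ∈ ({1, 2, 3} : Finset (Fin 4)) ↔ c ≠ 0 := by
  revert c; decide

theorem Fin.add_one_ne_self {t : ℕ} [NeZero t] (ht : 2 ≤ t) (i : Fin t) : i + 1 ≠ i := by
  rw [Ne, Fin.ext_iff, Fin.val_add_one_eq_ite]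
  split_ifs <;> omega

theorem Fin.add_one_add_one_ne_self {t : ℕ} [NeZero t] (ht : 3 ≤ t) (i : Fin t) :
    i + 1 + 1 ≠ i := by
  have := i.isLt
  rw [Ne, Fin.ext_iff, Fin.val_add_one_eq_ite, Fin.val_add_one_eq_ite]
  split_ifs <;> omega

namespace FlowerSnark

variable {t : ℕ}

/-- The link `L_t` joins `u_t` to `v_1` and `v_t` to `u_1`. -/
def twist (i : Fin t) : Equiv.Perm (Fin 4) := if (i : ℕ) = t - 1 then Equiv.swap 1 2 else 1

@[simp]
theorem twist_zero (i : Fin t) : twist i 0 = 0 := by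
  unfold twist; split_ifs <;> rfl

@[simp]
theorem twist_twist (i : Fin t) (c : Fin 4) : twist i (twist i c) = c := by
  unfold twist; split_ifs <;> simp

theorem twist_ne_zero (i : Fin t) {c : Fin 4} (hc : c ≠ 0) : twist i c ≠ 0 := by
  rw [← twist_zero i]; exact (twist i).injective.ne hc

variable [NeZero t]

/-- The neighbour of the leaf `p` in the next block (meaningless for a hub `p`). -/
def rimSucc (p : Fin t × Fin 4) : Fin t × Fin 4 := (p.1 + 1, twist p.1 p.2)

def linkEdge (i : Fin t) (c : Fin 4) : Sym2 (Fin t × Fin 4) := s((i, c), rimSucc (i, c))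

theorem adj_spoke_or_rim {p q : Fin t × Fin 4} (h : (FlowerSnark t).Adj p q) :
    (p.1 = q.1 ∧ (p.2 = 0 ∨ q.2 = 0)) ∨ (p.2 ≠ 0 ∧ q = rimSucc p) ∨
      (q.2 ≠ 0 ∧ p = rimSucc q) := by
  have one_way : ∀ p q : Fin t × Fin 4, (p.2 = 0 ∧ q.2 ≠ 0 ∧ p.1 = q.1) ∨
      (p.2 ≠ 0 ∧ p.2 = q.2 ∧ (q.1 : ℕ) = (p.1 : ℕ) + 1) ∨
      ((p.1 : ℕ) = t - 1 ∧ (q.1 : ℕ) = 0 ∧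
        ((p.2 = 1 ∧ q.2 = 2) ∨ (p.2 = 2 ∧ q.2 = 1) ∨ (p.2 = 3 ∧ q.2 = 3))) →
      (p.2 = 0 ∧ p.1 = q.1) ∨ (p.2 ≠ 0 ∧ q = rimSucc p) := by
    rintro ⟨i, a⟩ ⟨j, b⟩ h
    dsimp only at h ⊢
    rcases h with ⟨ha, -, hij⟩ | ⟨ha, rfl, hj⟩ | ⟨hi, hj, hab⟩
    · exact .inl ⟨ha, hij⟩
    · have : (i : ℕ) ≠ t - 1 := by omega
      refine .inr ⟨ha, Prod.ext (Fin.ext ?_) ?_⟩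
      · simp [rimSucc, Fin.val_add_one_eq_ite, this, hj]
      · simp [rimSucc, twist, this]
    · refine .inr ⟨by rcases hab with ⟨rfl, -⟩ | ⟨rfl, -⟩ | ⟨rfl, -⟩ <;> decide,
        Prod.ext (Fin.ext ?_) ?_⟩
      · simp [rimSucc, Fin.val_add_one_eq_ite, hi, hj]
      · rcases hab with ⟨rfl, rfl⟩ | ⟨rfl, rfl⟩ | ⟨rfl, rfl⟩ <;>
          simp [rimSucc, twist, hi, Equiv.swap_apply_of_ne_of_ne]
  rw [FlowerSnark, fromRel_adj] at h
  rcases h with ⟨-, h | h⟩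
  · rcases one_way p q h with h | h
    · exact .inl ⟨h.2, .inl h.1⟩
    · exact .inr (.inl h)
  · rcases one_way q p h with h | h
    · exact .inl ⟨h.2.symm, .inr h.1⟩
    · exact .inr (.inr h)

theorem flowerLink_eq_image (i : Fin t) :
    FlowerLink t i = linkEdge i '' ↑({1, 2, 3} : Finset (Fin 4)) := by
  simp only [Finset.coe_insert, Finset.coe_singleton, Set.image_insert_eq, Set.image_singleton,
    FlowerLink, linkEdge, rimSucc, twist]
  split_ifs with h
  · have : i + 1 = 0 := Fin.ext (by simp [Fin.val_add_one_eq_ite, h])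
    simp [this, Equiv.swap_apply_of_ne_of_ne]
  · simp

theorem linkEdge_injective (ht : 2 ≤ t) (i : Fin t) : (linkEdge i).Injective := by
  intro a b h
  rcases Sym2.eq_iff.1 h with ⟨hab, -⟩ | ⟨hab, -⟩
  · exact congrArg Prod.snd hab
  · exact absurd (congrArg Prod.fst hab).symm (Fin.add_one_ne_self ht i)

theorem ncard_flowerLink_inter (ht : 2 ≤ t) (i : Fin t) (E : Set (Sym2 (Fin t × Fin 4)))
    [DecidablePred (· ∈ E)] :
    (FlowerLink t i ∩ E).ncard = ∑ c ∈ {1, 2, 3}, if linkEdge i c ∈ E then 1 else 0 := by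
  rw [flowerLink_eq_image, Set.ncard_image_inter_eq_sum (linkEdge_injective ht i)]

theorem ncard_neighborSet_hub {H : SimpleGraph (Fin t × Fin 4)} [DecidableRel H.Adj]
    (hH : H ≤ FlowerSnark t) (i : Fin t) :
    (H.neighborSet (i, 0)).ncard = ∑ c ∈ {1, 2, 3}, if H.Adj (i, 0) (i, c) then 1 else 0 := by
  rw [SimpleGraph.ncard_neighborSet_eq_sum (s := Finset.image (Prod.mk i) {1, 2, 3}),
    Finset.sum_image fun _ _ _ _ h => (Prod.mk.inj h).2]
  intro q hq
  rcases adj_spoke_or_rim (hH hq) with ⟨rfl, -⟩ | ⟨h0, -⟩ | ⟨hq0, hrim⟩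
  · have : q.2 ≠ 0 := fun h => H.ne_of_adj hq (Prod.ext rfl h.symm)
    exact Finset.mem_image.2 ⟨q.2, Fin.mem_one_two_three_iff_ne_zero.2 this, rfl⟩
  · exact absurd rfl h0
  · exact absurd (congrArg Prod.snd hrim).symm (twist_ne_zero q.1 hq0)

theorem ncard_neighborSet_leaf {H : SimpleGraph (Fin t × Fin 4)} [DecidableRel H.Adj]
    (hH : H ≤ FlowerSnark t) (ht : 3 ≤ t) (i : Fin t) {c : Fin 4} (hc : c ≠ 0) :
    (H.neighborSet (i + 1, c)).ncard = (if H.Adj (i + 1, 0) (i + 1, c) then 1 else 0) +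
      (if linkEdge (i + 1) c ∈ H.edgeSet then 1 else 0) +
      (if linkEdge i (twist i c) ∈ H.edgeSet then 1 else 0) := by
  have hub_ne_succ : (i + 1, 0) ≠ rimSucc (i + 1, c) :=
    fun h => twist_ne_zero _ hc (congrArg Prod.snd h).symm
  have hub_ne_pred : ((i + 1, 0) : Fin t × Fin 4) ≠ (i, twist i c) :=
    fun h => twist_ne_zero _ hc (congrArg Prod.snd h).symm
  have succ_ne_pred : rimSucc (i + 1, c) ≠ (i, twist i c) :=
    fun h => Fin.add_one_add_one_ne_self ht i (congrArg Prod.fst h)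
  rw [SimpleGraph.ncard_neighborSet_eq_sum
      (s := {(i + 1, 0), rimSucc (i + 1, c), (i, twist i c)}),
    Finset.sum_insert (by simp [hub_ne_succ, hub_ne_pred]),
    Finset.sum_insert (by simp [succ_ne_pred]), Finset.sum_singleton, ← add_assoc]
  · have hpred : rimSucc (i, twist i c) = (i + 1, c) := by simp [rimSucc]
    simp only [linkEdge, hpred, SimpleGraph.mem_edgeSet, H.adj_comm (i + 1, c)]
  · intro q hq
    simp only [Finset.mem_insert, Finset.mem_singleton]
    rcases adj_spoke_or_rim (hH hq) with ⟨h1, h2⟩ | ⟨-, rfl⟩ | ⟨-, hrim⟩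
    · exact .inl (Prod.ext h1.symm (h2.resolve_left hc))
    · exact .inr (.inl rfl)
    · have hq1 : q.1 = i := add_right_cancel (congrArg Prod.fst hrim).symm
      have hq2 : q.2 = twist i c := by
        have hc : c = twist q.1 q.2 := congrArg Prod.snd hrim
        rw [hc, hq1, twist_twist]
      exact .inr (.inr (Prod.ext hq1 hq2))

open scoped Classical in
theorem ncard_flowerLink_inter_add_ncard_succ (ht : 3 ≤ t) {H : SimpleGraph (Fin t × Fin 4)}
    (hH : H ≤ FlowerSnark t) {d : ℕ} (hd : ∀ v, (H.neighborSet v).ncard = d) (i : Fin t) :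
    (FlowerLink t i ∩ H.edgeSet).ncard + (FlowerLink t (i + 1) ∩ H.edgeSet).ncard = d + d := by
  have leaves :
      ∑ c ∈ ({1, 2, 3} : Finset (Fin 4)), (H.neighborSet (i + 1, c)).ncard = 3 * d := by
    simp [hd]
  have hub : ∑ c ∈ ({1, 2, 3} : Finset (Fin 4)),
      (if H.Adj (i + 1, 0) (i + 1, c) then 1 else 0) = d := by
    rw [← ncard_neighborSet_hub hH, hd]
  have link_pred : ∑ c ∈ ({1, 2, 3} : Finset (Fin 4)),
      (if linkEdge i (twist i c) ∈ H.edgeSet then 1 else 0) =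
        (FlowerLink t i ∩ H.edgeSet).ncard := by
    rw [ncard_flowerLink_inter (by omega) i H.edgeSet]
    refine Equiv.Perm.sum_comp (twist i) _ (fun c => if linkEdge i c ∈ H.edgeSet then 1 else 0) ?_
    intro c hc
    exact Fin.mem_one_two_three_iff_ne_zero.2 fun h => hc (h ▸ twist_zero i)
  have link_succ := ncard_flowerLink_inter (by omega) (i + 1) H.edgeSet
  rw [Finset.sum_congr rfl fun c hc =>
      ncard_neighborSet_leaf hH ht i (Fin.mem_one_two_three_iff_ne_zero.1 hc),
    Finset.sum_add_distrib, Finset.sum_add_distrib, hub, link_pred, ← link_succ] at leaves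
  omega

theorem ncard_flowerLink_inter_of_regular (ht : Odd t) (h3 : 3 ≤ t)
    {H : SimpleGraph (Fin t × Fin 4)} (hH : H ≤ FlowerSnark t) {d : ℕ}
    (hd : ∀ v, (H.neighborSet v).ncard = d) (i : Fin t) :
    (FlowerLink t i ∩ H.edgeSet).ncard = d := by
  have hsum := ncard_flowerLink_inter_add_ncard_succ h3 hH hd
  have hconst := Fin.apply_eq_apply_of_add_apply_add_one_eq ht hsum i (i + 1)
  have := hsum i
  omega

end FlowerSnark

/-- For every odd `t ≥ 5`, every perfect matching of the
Flower snark `J(t)` contains exactly one edge from each link `L_i`;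
consequently every 2-factor of `J(t)` contains exactly two edges from each
link `L_i`. -/
theorem flowerSnark_matching_link (t : ℕ) (ht : Odd t) (h5 : 5 ≤ t) [NeZero t] :
    (∀ M, IsOneFactor (FlowerSnark t) M →
      ∀ i : Fin t, (FlowerLink t i ∩ M.edgeSet).ncard = 1) ∧
    (∀ H, IsTwoFactor (FlowerSnark t) H →
      ∀ i : Fin t, (FlowerLink t i ∩ H.edgeSet).ncard = 2) :=
  ⟨fun _ hM => FlowerSnark.ncard_flowerLink_inter_of_regular ht (by omega) hM.1 hM.2,
    fun _ hH => FlowerSnark.ncard_flowerLink_inter_of_regular ht (by omega) hH.1 hH.2⟩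
end
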